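/- arXiv:2208.06930 — 2 statements merged into one kernel-verified Lean document; each statement's English description precedes it below -/
import Mathlib

section
/- Let τ > 0, r ∈ ℝ, and let f* : ℝ → ℝ be a nonnegative continuous probability density supported on (0,∞) with ∫₀^∞ s f*(s) ds < ∞. Define C(K) = e^{−rτ} ∫_K^∞ (s − K) f*(s) ds for K > 0. Then C is twice differentiable on (0,∞) and C″(K) = e^{−rτ} f*(K) for every K > 0; in particular the risk-neutral density is recovered from the convexity of option prices: f*(K) = e^{rτ} C″(K). -/
/-! Splitting `(s - K) f(s) = s f(s) - K f(s)` writes the undiscounted call price as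
`∫_K^∞ s f(s) ds - K ∫_K^∞ f(s) ds`. By the fundamental theorem of calculus each tail integral
`∫_K^∞ g` has derivative `-g(K)`, so the `K f(K)` terms cancel and `C'(K) = -e^{-rτ} ∫_K^∞ f`;
differentiating once more gives `C''(K) = e^{-rτ} f(K)`. -/

open MeasureTheory Set

theorem hasDerivAt_integral_Ioi {E : Type*} [NormedAddCommGroup E] [NormedSpace ℝ E]
    [CompleteSpace E] {g : ℝ → E} {a K : ℝ} (hg : IntegrableOn g (Ioi a)) (hK : a < K)
    (hgK : ContinuousAt g K) :
    HasDerivAt (fun x => ∫ s in Ioi x, g s) (-g K) K := by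
  have h_tail : ∀ x ∈ Ioi a, ∫ s in Ioi x, g s = (∫ s in Ioi a, g s) - ∫ s in a..x, g s :=
    fun x hx => by rw [← intervalIntegral.integral_Ioi_sub_Ioi hg hx.le, sub_sub_cancel]
  have h_ftc : HasDerivAt (fun x => ∫ s in a..x, g s) (g K) K :=
    intervalIntegral.integral_hasDerivAt_right
      ((intervalIntegrable_iff_integrableOn_Ioc_of_le hK.le).2 (hg.mono_set Ioc_subset_Ioi_self))
      (AEStronglyMeasurable.stronglyMeasurableAtFilter_of_mem hg.aestronglyMeasurable
        (isOpen_Ioi.mem_nhds hK)) hgK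
  exact (h_ftc.const_sub _).congr_of_eventuallyEq
    (Filter.eventuallyEq_of_mem (isOpen_Ioi.mem_nhds hK) h_tail)

theorem integrableOn_Ioi_of_integrableOn_id_mul {f : ℝ → ℝ} {a : ℝ} (ha : 0 < a)
    (hf : IntegrableOn (fun s => s * f s) (Ioi a)) : IntegrableOn f (Ioi a) := by
  have h_inv_mul : IntegrableOn (fun s => s⁻¹ * (s * f s)) (Ioi a) := by
    refine Integrable.bdd_mul (c := a⁻¹) hf measurable_inv.aestronglyMeasurable ?_
    filter_upwards [ae_restrict_mem measurableSet_Ioi] with s (hs : a < s)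
    rw [norm_inv, Real.norm_of_nonneg (ha.trans hs).le]
    exact inv_anti₀ ha hs.le
  refine h_inv_mul.congr_fun (fun s (hs : a < s) => ?_) measurableSet_Ioi
  exact inv_mul_cancel_left₀ (ha.trans hs).ne' (f s)

noncomputable def callIntegral (f : ℝ → ℝ) (K : ℝ) : ℝ :=
  ∫ s in Ioi K, (s - K) * f s

section callIntegral

variable {f : ℝ → ℝ}

theorem callIntegral_eq_sub (hf_mom : IntegrableOn (fun s => s * f s) (Ioi 0)) {K : ℝ}
    (hK : 0 < K) :
    callIntegral f K = (∫ s in Ioi K, s * f s) - K * ∫ s in Ioi K, f s := by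
  have h_mom : IntegrableOn (fun s => s * f s) (Ioi K) := hf_mom.mono_set (Ioi_subset_Ioi hK.le)
  simp only [callIntegral, sub_mul]
  rw [integral_sub h_mom ((integrableOn_Ioi_of_integrableOn_id_mul hK h_mom).const_mul K),
    integral_const_mul]

theorem hasDerivAt_integral_Ioi_of_integrableOn_id_mul
    (hf_mom : IntegrableOn (fun s => s * f s) (Ioi 0)) {K : ℝ} (hK : 0 < K)
    (hfK : ContinuousAt f K) :
    HasDerivAt (fun x => ∫ s in Ioi x, f s) (-f K) K := by
  have h_half : 0 < K / 2 := half_pos hK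
  exact hasDerivAt_integral_Ioi
    (integrableOn_Ioi_of_integrableOn_id_mul h_half (hf_mom.mono_set (Ioi_subset_Ioi h_half.le)))
    (half_lt_self hK) hfK

theorem hasDerivAt_callIntegral (hf_mom : IntegrableOn (fun s => s * f s) (Ioi 0)) {K : ℝ}
    (hK : 0 < K) (hfK : ContinuousAt f K) :
    HasDerivAt (callIntegral f) (-∫ s in Ioi K, f s) K := by
  have h_first : HasDerivAt (fun x => ∫ s in Ioi x, s * f s) (-(K * f K)) K :=
    hasDerivAt_integral_Ioi hf_mom hK (continuousAt_id.mul hfK)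
  have h_sub := h_first.sub
    ((hasDerivAt_id K).mul (hasDerivAt_integral_Ioi_of_integrableOn_id_mul hf_mom hK hfK))
  refine (h_sub.congr_deriv (by simp)).congr_of_eventuallyEq ?_
  filter_upwards [isOpen_Ioi.mem_nhds hK] with x (hx : 0 < x)
  exact callIntegral_eq_sub hf_mom hx

theorem hasDerivAt_deriv_callIntegral (hf_mom : IntegrableOn (fun s => s * f s) (Ioi 0))
    {K : ℝ} (hK : 0 < K) (hf : Continuous f) :
    HasDerivAt (deriv (callIntegral f)) (f K) K := by
  have h_deriv : deriv (callIntegral f) =ᶠ[nhds K] fun x => -∫ s in Ioi x, f s := by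
    filter_upwards [isOpen_Ioi.mem_nhds hK] with x (hx : 0 < x)
    exact (hasDerivAt_callIntegral hf_mom hx hf.continuousAt).deriv
  have h_tail := hasDerivAt_integral_Ioi_of_integrableOn_id_mul hf_mom hK hf.continuousAt
  exact (h_tail.neg.congr_deriv (neg_neg _)).congr_of_eventuallyEq h_deriv

end callIntegral

theorem breeden_litzenberger_general
    (τ r : ℝ)
    (f : ℝ → ℝ)
    (hf_cont : Continuous f)
    (hf_mom : IntegrableOn (fun s => s * f s) (Ioi (0 : ℝ)))
    (C : ℝ → ℝ)
    (hC : ∀ K, C K = Real.exp (-r * τ) * ∫ s in Ioi K, (s - K) * f s) :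
    ∀ K > (0 : ℝ),
      DifferentiableAt ℝ C K ∧
      HasDerivAt (deriv C) (Real.exp (-r * τ) * f K) K ∧
      f K = Real.exp (r * τ) * deriv (deriv C) K := by
  intro K hK
  have hC_eq : C = fun x => Real.exp (-r * τ) * callIntegral f x := funext hC
  have h_second : HasDerivAt (deriv C) (Real.exp (-r * τ) * f K) K := by
    rw [hC_eq, deriv_const_mul_field']
    exact (hasDerivAt_deriv_callIntegral hf_mom hK hf_cont).const_mul _
  refine ⟨?_, h_second, ?_⟩
  · rw [hC_eq]
    exact ((hasDerivAt_callIntegral hf_mom hK hf_cont.continuousAt).const_mul _).differentiableAt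
  · rw [h_second.deriv, ← mul_assoc, ← Real.exp_add]
    simp

/-- Breeden–Litzenberger: the call-price function is twice differentiable on `(0,∞)`
with `C″(K) = e^{−rτ} f*(K)`, so the risk-neutral density is recovered from the
convexity of option prices: `f*(K) = e^{rτ} C″(K)`. -/
theorem breeden_litzenberger
    (τ r : ℝ) (hτ : 0 < τ)
    (f : ℝ → ℝ)
    (hf_nonneg : ∀ s, 0 ≤ f s)
    (hf_cont : Continuous f)
    (hf_supp : ∀ s ≤ (0 : ℝ), f s = 0)
    (hf_prob : ∫ s in Ioi (0 : ℝ), f s = 1)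
    (hf_mom : IntegrableOn (fun s => s * f s) (Ioi (0 : ℝ)))
    (C : ℝ → ℝ)
    (hC : ∀ K, C K = Real.exp (-r * τ) * ∫ s in Ioi K, (s - K) * f s) :
    ∀ K > (0 : ℝ),
      DifferentiableAt ℝ C K ∧
      HasDerivAt (deriv C) (Real.exp (-r * τ) * f K) K ∧
      f K = Real.exp (r * τ) * deriv (deriv C) K :=
  breeden_litzenberger_general τ r f hf_cont hf_mom C hC
end

section
/- (Proposition 1: sensitivity of state prices with respect to the wildfire-exposed stock.) Let T > 0, σ > 0, σ^w > 0, γ > 0, q, q^w, β, μ, α, r ∈ ℝ, W₀ > 0, S₀^w > 0, and let G and G^w be independent real-valued centered Gaussian random variables with variance T on a probability space. Define the terminal wildfire-exposed stock price by log S_T^w = log S₀^w + (α + βμ − β²σ²/2 − (σ^w)²/2)T + βσG + σ^w G^w, the terminal wealth of a constant-proportions investor by W_T = W₀ · exp( (q(μ − r) + q^w(α + βμ − r) + r − q²σ²/2)T + (q + βq^w)σG + q^w σ^w G^w ), and the pricing kernel by ζ_T = W_T^{−γ} (the marginal utility of CRRA terminal utility u(w) = w^{1−γ}/(1−γ)).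 Then ζ_T is integrable and there exists a constant c ∈ ℝ such that, almost surely, E[ζ_T | σ(S_T^w)] = e^c · (S_T^w)^{−γ^w}, where γ^w = γ · ( q^w + q · βσ²/(β²σ² + (σ^w)²) ). Equivalently, writing ρ = βσ/√(β²σ² + (σ^w)²) for the correlation between the log returns of the wildfire-exposed stock and the index and σ̃^w = √(β²σ² + (σ^w)²) for the total volatility of the wildfire-exposed stock, the elasticity of the conditional pricing kernel with respect to the stock satisfies γ^w = (q^w + ρ(σ/σ̃^w) q) · γ; in particular the Arrow–Pratt risk aversion with respect to the wildfire-exposed stock is proportional to the relative risk aversion γ with respect to wealth, with proportionality constant q^w + ρ(σ/σ̃^w)q. -/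
/-!
Up to additive constants, `log S_T^w` is `X = βσ G + σ^w G^w` and `log ζ_T` is a linear form `Z`
in `(G, G^w)`, so `(X, Z)` is jointly Gaussian. With `k = Cov(X, Z) / Var X`, the residual `Z - k X`
is uncorrelated with `X`, hence independent of it, and therefore
`E[e^Z | X] = e^{k X} E[e^{Z - k X}]`. Since `G` and `G^w` are independent with the same variance,
`k = -γ^w`.
-/

open MeasureTheory ProbabilityTheory
open scoped Real NNReal

theorem MeasurableEmbedding.comap_comp {α β γ : Type*} [mβ : MeasurableSpace β]
    [mγ : MeasurableSpace γ] {f : β → γ} (hf : MeasurableEmbedding f) (g : α → β) :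
    mγ.comap (f ∘ g) = mβ.comap g := by
  rw [← MeasurableSpace.comap_comp, hf.comap_eq]

lemma MeasurableSpace.comap_const_mul_exp_add {α : Type*} (X : α → ℝ) {c : ℝ} (hc : c ≠ 0)
    (m : ℝ) :
    MeasurableSpace.comap (fun ω ↦ c * rexp (m + X ω)) inferInstance
      = MeasurableSpace.comap X inferInstance := by
  have hemb : MeasurableEmbedding fun x ↦ c * rexp (m + x) :=
    (by fun_prop : Continuous _).measurableEmbedding
      ((mul_right_injective₀ hc).comp (Real.exp_injective.comp (add_right_injective m)))
  exact hemb.comap_comp X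

section IndepFun

variable {Ω β ε : Type*} {mΩ : MeasurableSpace Ω} [mβ : MeasurableSpace β] [MeasurableSpace ε]
  {P : Measure Ω} [IsFiniteMeasure P]

theorem condExp_comp_mul_comp_of_indepFun {X : Ω → β} {Y : Ω → ε} (hX : Measurable X)
    (hY : Measurable Y) (hXY : X ⟂ᵢ[P] Y) {f : β → ℝ} {g : ε → ℝ} (hf : Measurable f)
    (hg : Measurable g) (hfX : Integrable (fun ω ↦ f (X ω)) P)
    (hgY : Integrable (fun ω ↦ g (Y ω)) P) :
    P[fun ω ↦ f (X ω) * g (Y ω) | mβ.comap X] =ᵐ[P] fun ω ↦ f (X ω) * P[fun ω ↦ g (Y ω)] := by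
  have hfg : (fun ω ↦ f (X ω)) ⟂ᵢ[P] (fun ω ↦ g (Y ω)) := hXY.comp hf hg
  have hpull : P[fun ω ↦ f (X ω) * g (Y ω) | mβ.comap X] =ᵐ[P]
      fun ω ↦ f (X ω) * P[fun ω ↦ g (Y ω) | mβ.comap X] ω :=
    condExp_mul_of_stronglyMeasurable_left
      (hf.comp (comap_measurable X)).stronglyMeasurable (hfg.integrable_mul hfX hgY) hgY
  have hindep : P[fun ω ↦ g (Y ω) | mβ.comap X] =ᵐ[P] fun _ ↦ P[fun ω ↦ g (Y ω)] :=
    condExp_indep_eq (hg.comp hY).comap_le hX.comap_le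
      (comap_measurable (g ∘ Y)).stronglyMeasurable
      ((IndepFun_iff_Indep _ _ _).1 (hXY.comp measurable_id hg).symm)
  filter_upwards [hpull, hindep] with ω h₁ h₂
  rw [h₁, h₂]

end IndepFun

namespace ProbabilityTheory

variable {Ω : Type*} {mΩ : MeasurableSpace Ω} {P : Measure Ω}

lemma HasLaw.variance_eq_of_gaussianReal {X : Ω → ℝ} {μ : ℝ} {v : ℝ≥0}
    (hX : HasLaw X (gaussianReal μ v) P) : Var[X; P] = v := by
  rw [hX.variance_eq, variance_id_gaussianReal]

lemma HasGaussianLaw.prodMk_linear {G H : Ω → ℝ} (h : HasGaussianLaw (fun ω ↦ (G ω, H ω)) P)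
    (a b c d : ℝ) : HasGaussianLaw (fun ω ↦ (a * G ω + b * H ω, c * G ω + d * H ω)) P := by
  let L : ℝ × ℝ →L[ℝ] ℝ × ℝ :=
    (a • ContinuousLinearMap.fst ℝ ℝ ℝ + b • ContinuousLinearMap.snd ℝ ℝ ℝ).prod
      (c • ContinuousLinearMap.fst ℝ ℝ ℝ + d • ContinuousLinearMap.snd ℝ ℝ ℝ)
  simpa [L] using h.map_fun L

lemma HasGaussianLaw.integrable_exp {X : Ω → ℝ} (hX : HasGaussianLaw X P) :
    Integrable (fun ω ↦ rexp (X ω)) P := by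
  have := hX.isProbabilityMeasure
  refine (integrable_map_measure Real.continuous_exp.aestronglyMeasurable hX.aemeasurable).1 ?_
  rw [hX.map_eq_gaussianReal]
  simpa using integrable_exp_mul_gaussianReal (μ := P[X]) (v := Var[X; P].toNNReal) 1

lemma IndepFun.covariance_linear [IsFiniteMeasure P] {G H : Ω → ℝ} (hGH : G ⟂ᵢ[P] H)
    (hG : MemLp G 2 P) (hH : MemLp H 2 P) (a b c d : ℝ) :
    cov[fun ω ↦ a * G ω + b * H ω, fun ω ↦ c * G ω + d * H ω; P]
      = a * c * Var[G; P] + b * d * Var[H; P] := by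
  change cov[(fun ω ↦ a * G ω) + (fun ω ↦ b * H ω), (fun ω ↦ c * G ω) + (fun ω ↦ d * H ω); P] = _
  rw [covariance_add_left (hG.const_mul a) (hH.const_mul b) ((hG.const_mul c).add (hH.const_mul d)),
    covariance_add_right (hG.const_mul a) (hG.const_mul c) (hH.const_mul d),
    covariance_add_right (hH.const_mul b) (hG.const_mul c) (hH.const_mul d)]
  simp only [covariance_const_mul_left, covariance_const_mul_right]
  rw [covariance_self hG.aemeasurable, covariance_self hH.aemeasurable,
    hGH.covariance_eq_zero hG hH, covariance_comm, hGH.covariance_eq_zero hG hH]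
  ring

theorem HasGaussianLaw.condExp_exp {X Z : Ω → ℝ} (hXZ : HasGaussianLaw (fun ω ↦ (X ω, Z ω)) P)
    (hX : Measurable X) (hZ : Measurable Z) (hvar : Var[X; P] ≠ 0) :
    ∃ c, P[fun ω ↦ rexp (Z ω) | MeasurableSpace.comap X inferInstance] =ᵐ[P]
      fun ω ↦ rexp (c + cov[X, Z; P] / Var[X; P] * X ω) := by
  have := hXZ.isProbabilityMeasure
  set k := cov[X, Z; P] / Var[X; P]
  have hXY : HasGaussianLaw (fun ω ↦ (X ω, Z ω - k * X ω)) P := by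
    convert hXZ.prodMk_linear 1 0 (-k) 1 using 3 <;> ring
  have hcov : cov[X, fun ω ↦ Z ω - k * X ω; P] = 0 := by
    rw [covariance_fun_sub_right hXZ.fst.memLp_two hXZ.snd.memLp_two
      (hXZ.fst.memLp_two.const_mul k), covariance_const_mul_right, covariance_self hX.aemeasurable,
      div_mul_cancel₀ _ hvar, sub_self]
  have hexp : (fun ω ↦ rexp (Z ω)) = fun ω ↦ rexp (k * X ω) * rexp (Z ω - k * X ω) := by
    ext ω
    rw [← Real.exp_add, add_sub_cancel]
  refine ⟨Real.log P[fun ω ↦ rexp (Z ω - k * X ω)], ?_⟩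
  rw [hexp]
  filter_upwards [condExp_comp_mul_comp_of_indepFun (f := fun x ↦ rexp (k * x)) (g := rexp)
    (Y := fun ω ↦ Z ω - k * X ω) hX (hZ.sub (hX.const_mul k))
    (hXY.indepFun_of_covariance_eq_zero hcov) (Real.measurable_exp.comp (measurable_const_mul k))
    Real.measurable_exp (hXZ.fst.fun_smul k).integrable_exp hXY.snd.integrable_exp] with ω hω
  rw [hω, Real.exp_add, Real.exp_log (integral_exp_pos hXY.snd.integrable_exp), mul_comm]

theorem IndepFun.condExp_exp_linear {G H : Ω → ℝ} (hGm : Measurable G) (hHm : Measurable H)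
    (hG : HasGaussianLaw G P) (hH : HasGaussianLaw H P) (hGH : G ⟂ᵢ[P] H) {a b : ℝ}
    (hvar : a ^ 2 * Var[G; P] + b ^ 2 * Var[H; P] ≠ 0) (u w : ℝ) :
    ∃ c, P[fun ω ↦ rexp (u * G ω + w * H ω) |
        MeasurableSpace.comap (fun ω ↦ a * G ω + b * H ω) inferInstance] =ᵐ[P]
      fun ω ↦ rexp (c + (a * u * Var[G; P] + b * w * Var[H; P])
        / (a ^ 2 * Var[G; P] + b ^ 2 * Var[H; P]) * (a * G ω + b * H ω)) := by
  have := hG.isProbabilityMeasure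
  have hXZ := (hGH.hasGaussianLaw hG hH).prodMk_linear a b u w
  have hcov := hGH.covariance_linear hG.memLp_two hH.memLp_two
  have hX : Measurable fun ω ↦ a * G ω + b * H ω := by fun_prop
  have hvarX : Var[fun ω ↦ a * G ω + b * H ω; P] = a ^ 2 * Var[G; P] + b ^ 2 * Var[H; P] := by
    rw [← covariance_self hX.aemeasurable, hcov, ← sq, ← sq]
  simpa only [hvarX, hcov] using hXZ.condExp_exp hX (by fun_prop) (hvarX ▸ hvar)

theorem IndepFun.condExp_exp_affine {G H : Ω → ℝ} (hGm : Measurable G) (hHm : Measurable H)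
    (hG : HasGaussianLaw G P) (hH : HasGaussianLaw H P) (hGH : G ⟂ᵢ[P] H) {a b : ℝ}
    (hvar : a ^ 2 * Var[G; P] + b ^ 2 * Var[H; P] ≠ 0) (d u w : ℝ) :
    Integrable (fun ω ↦ rexp (d + u * G ω + w * H ω)) P ∧
      ∃ c, P[fun ω ↦ rexp (d + u * G ω + w * H ω) |
          MeasurableSpace.comap (fun ω ↦ a * G ω + b * H ω) inferInstance] =ᵐ[P]
        fun ω ↦ rexp (c + (a * u * Var[G; P] + b * w * Var[H; P])
          / (a ^ 2 * Var[G; P] + b ^ 2 * Var[H; P]) * (a * G ω + b * H ω)) := by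
  have hsplit : (fun ω ↦ rexp (d + u * G ω + w * H ω))
      = rexp d • fun ω ↦ rexp (u * G ω + w * H ω) := by
    ext ω
    rw [Pi.smul_apply, smul_eq_mul, ← Real.exp_add, add_assoc]
  obtain ⟨c, hc⟩ := hGH.condExp_exp_linear hGm hHm hG hH hvar u w
  rw [hsplit]
  refine ⟨(((hGH.hasGaussianLaw hG hH).prodMk_linear u w 0 0).fst.integrable_exp).smul _,
    d + c, ?_⟩
  filter_upwards [condExp_smul (rexp d) (fun ω ↦ rexp (u * G ω + w * H ω)) _, hc]
    with ω hsmul hω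
  rw [hsmul, Pi.smul_apply, hω, smul_eq_mul, ← Real.exp_add, add_assoc]

end ProbabilityTheory

lemma Real.mul_exp_rpow {A : ℝ} (hA : 0 < A) (x y : ℝ) :
    (A * rexp x) ^ y = rexp (Real.log A * y + x * y) := by
  rw [Real.mul_rpow hA.le (Real.exp_pos x).le, Real.rpow_def_of_pos hA, ← Real.exp_mul,
    ← Real.exp_add]

-- `Cov(log S_T^w, log ζ_T) / Var(log S_T^w)`, using `Var G = Var G^w = T`.
lemma wildfire_regression_slope {T σ σw γ q qw β : ℝ} (hT : T ≠ 0)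
    (hs : β ^ 2 * σ ^ 2 + σw ^ 2 ≠ 0) :
    (β * σ * (-γ * (q + β * qw) * σ) * T + σw * (-γ * qw * σw) * T)
        / ((β * σ) ^ 2 * T + σw ^ 2 * T)
      = -(γ * (qw + q * (β * σ ^ 2 / (β ^ 2 * σ ^ 2 + σw ^ 2)))) := by
  field_simp
  ring

lemma wildfire_elasticity_eq_correlation_form {s : ℝ} (hs : 0 < s) (γ q qw β σ : ℝ) :
    γ * (qw + q * (β * σ ^ 2 / s)) = (qw + (β * σ / √s) * (σ / √s) * q) * γ := by
  rw [div_mul_div_comm, Real.mul_self_sqrt hs.le]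
  ring

theorem state_price_sensitivity_wildfire_stock_general
    {Ω : Type*} [MeasurableSpace Ω] (P : Measure Ω) [IsProbabilityMeasure P]
    (T σ σw γ q qw β μ α r W₀ S₀w : ℝ)
    (hT : 0 < T) (hσw : 0 < σw)
    (hW₀ : 0 < W₀) (hS₀w : 0 < S₀w)
    (G Gw : Ω → ℝ)
    (hGmeas : Measurable G) (hGwmeas : Measurable Gw)
    (hindep : IndepFun G Gw P)
    (hG : Measure.map G P = gaussianReal 0 T.toNNReal)
    (hGw : Measure.map Gw P = gaussianReal 0 T.toNNReal)
    (STw W ζ : Ω → ℝ)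
    (hSTw : ∀ ω, STw ω =
      S₀w * Real.exp ((α + β * μ - β ^ 2 * σ ^ 2 / 2 - σw ^ 2 / 2) * T
        + β * σ * G ω + σw * Gw ω))
    (hW : ∀ ω, W ω =
      W₀ * Real.exp ((q * (μ - r) + qw * (α + β * μ - r) + r - q ^ 2 * σ ^ 2 / 2) * T
        + (q + β * qw) * σ * G ω + qw * σw * Gw ω))
    (hζ : ∀ ω, ζ ω = W ω ^ (-γ))
    (γw : ℝ)
    (hγw : γw = γ * (qw + q * (β * σ ^ 2 / (β ^ 2 * σ ^ 2 + σw ^ 2)))) :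
    Integrable ζ P ∧
      (∃ c : ℝ,
        P[ζ | MeasurableSpace.comap STw inferInstance] =ᵐ[P]
          (fun ω => Real.exp c * STw ω ^ (-γw))) ∧
      γw =
        (qw + (β * σ / Real.sqrt (β ^ 2 * σ ^ 2 + σw ^ 2)) *
            (σ / Real.sqrt (β ^ 2 * σ ^ 2 + σw ^ 2)) * q) * γ := by
  set m := (α + β * μ - β ^ 2 * σ ^ 2 / 2 - σw ^ 2 / 2) * T
  have hs : 0 < β ^ 2 * σ ^ 2 + σw ^ 2 := by positivity
  have hGlaw : HasLaw G (gaussianReal 0 T.toNNReal) P := ⟨hGmeas.aemeasurable, hG⟩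
  have hGwlaw : HasLaw Gw (gaussianReal 0 T.toNNReal) P := ⟨hGwmeas.aemeasurable, hGw⟩
  have hvar : Var[G; P] = T ∧ Var[Gw; P] = T := by
    simp only [hGlaw.variance_eq_of_gaussianReal, hGwlaw.variance_eq_of_gaussianReal,
      Real.coe_toNNReal _ hT.le, and_self]
  obtain ⟨hint, c₀, hc₀⟩ := hindep.condExp_exp_affine hGmeas hGwmeas hGlaw.hasGaussianLaw
    hGwlaw.hasGaussianLaw (a := β * σ) (b := σw) (by rw [hvar.1, hvar.2]; positivity)
    (Real.log W₀ * -γ + (q * (μ - r) + qw * (α + β * μ - r) + r - q ^ 2 * σ ^ 2 / 2) * T * -γ)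
    (-γ * (q + β * qw) * σ) (-γ * qw * σw)
  rw [hvar.1, hvar.2, wildfire_regression_slope hT.ne' hs.ne', ← hγw] at hc₀
  have hζ' : ζ = fun ω ↦ rexp (Real.log W₀ * -γ
      + (q * (μ - r) + qw * (α + β * μ - r) + r - q ^ 2 * σ ^ 2 / 2) * T * -γ
      + -γ * (q + β * qw) * σ * G ω + -γ * qw * σw * Gw ω) := by
    ext ω
    rw [hζ, hW, Real.mul_exp_rpow hW₀]
    congr 1
    ring
  have hSTw' : STw = fun ω ↦ S₀w * rexp (m + (β * σ * G ω + σw * Gw ω)) := by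
    ext ω
    rw [hSTw, add_assoc]
  refine ⟨hζ' ▸ hint, ⟨c₀ + γw * (Real.log S₀w + m), ?_⟩,
    hγw.trans (wildfire_elasticity_eq_correlation_form hs γ q qw β σ)⟩
  rw [hSTw', MeasurableSpace.comap_const_mul_exp_add _ hS₀w.ne', hζ']
  filter_upwards [hc₀] with ω hω
  rw [hω, Real.mul_exp_rpow hS₀w, ← Real.exp_add]
  congr 1
  ring

/-- Proposition 1 (sensitivity of state prices with respect to the wildfire-exposed
stock): in the two-asset Merton model with CRRA terminal utility, the pricing kernel
`ζ_T = W_T^{−γ}` is integrable and its conditional expectation given the terminal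
wildfire-exposed stock price is `e^c (S_T^w)^{−γ^w}` with
`γ^w = γ(q^w + q·βσ²/(β²σ² + (σ^w)²))`; equivalently,
`γ^w = (q^w + ρ(σ/σ̃^w)q)·γ` where `ρ = βσ/√(β²σ² + (σ^w)²)` and
`σ̃^w = √(β²σ² + (σ^w)²)`. -/
theorem state_price_sensitivity_wildfire_stock
    {Ω : Type*} [MeasurableSpace Ω] (P : Measure Ω) [IsProbabilityMeasure P]
    (T σ σw γ q qw β μ α r W₀ S₀w : ℝ)
    (hT : 0 < T) (hσ : 0 < σ) (hσw : 0 < σw) (hγ : 0 < γ)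
    (hW₀ : 0 < W₀) (hS₀w : 0 < S₀w)
    (G Gw : Ω → ℝ)
    (hGmeas : Measurable G) (hGwmeas : Measurable Gw)
    (hindep : IndepFun G Gw P)
    (hG : Measure.map G P = gaussianReal 0 T.toNNReal)
    (hGw : Measure.map Gw P = gaussianReal 0 T.toNNReal)
    (STw W ζ : Ω → ℝ)
    (hSTw : ∀ ω, STw ω =
      S₀w * Real.exp ((α + β * μ - β ^ 2 * σ ^ 2 / 2 - σw ^ 2 / 2) * T
        + β * σ * G ω + σw * Gw ω))
    (hW : ∀ ω, W ω =
      W₀ * Real.exp ((q * (μ - r) + qw * (α + β * μ - r) + r - q ^ 2 * σ ^ 2 / 2) * T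
        + (q + β * qw) * σ * G ω + qw * σw * Gw ω))
    (hζ : ∀ ω, ζ ω = W ω ^ (-γ))
    (γw : ℝ)
    (hγw : γw = γ * (qw + q * (β * σ ^ 2 / (β ^ 2 * σ ^ 2 + σw ^ 2)))) :
    Integrable ζ P ∧
      (∃ c : ℝ,
        P[ζ | MeasurableSpace.comap STw inferInstance] =ᵐ[P]
          (fun ω => Real.exp c * STw ω ^ (-γw))) ∧
      γw =
        (qw + (β * σ / Real.sqrt (β ^ 2 * σ ^ 2 + σw ^ 2)) *
            (σ / Real.sqrt (β ^ 2 * σ ^ 2 + σw ^ 2)) * q) * γ :=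
  state_price_sensitivity_wildfire_stock_general P T σ σw γ q qw β μ α r W₀ S₀w hT hσw hW₀ hS₀w G Gw
    hGmeas hGwmeas hindep hG hGw STw W ζ hSTw hW hζ γw hγw
end
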